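/- Let s = (s₁,s₂,s₃) ∈ ℝ³ with s₁,s₂,s₃ > 0. Then the following are equivalent: (i) p_r(s) ≥ 0 for all r = 1,2,3; (ii) there exists a = (a₁,a₂,a₃) ∈ ℝ³ such that the 3×3 symmetric matrix M₆(s,a) is positive semidefinite, s_{r+1} + s_{r+2} - s_r + a_r ≥ 0 for all r, and a_r ≤ a_r⁰(s) for all r. (This is the matrix-level statement that g_s on W⁶ has strongly nonnegative curvature if and only if it has sec ≥ 0.) -/

import Mathlib

open Matrix

/-- `S(s) = 2(s₁s₂+s₁s₃+s₂s₃) - (s₁²+s₂²+s₃²)`. -/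
noncomputable def Spoly (s : Fin 3 → ℝ) : ℝ :=
  2 * (s 0 * s 1 + s 0 * s 2 + s 1 * s 2) - (s 0 ^ 2 + s 1 ^ 2 + s 2 ^ 2)

/-- `p_r(s) = (s_{r+1}-s_{r+2})² + 2 s_r (s_{r+1}+s_{r+2}) - 3 s_r²`, indices mod 3. -/
noncomputable def ppoly (s : Fin 3 → ℝ) (r : Fin 3) : ℝ :=
  (s (r + 1) - s (r + 2)) ^ 2 + 2 * s r * (s (r + 1) + s (r + 2)) - 3 * s r ^ 2

/-- `a_r⁰(s) = ((s_{r+1}-s_{r+2})² - s_r²)/(2 s_r)`, indices mod 3. -/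
noncomputable def a0 (s : Fin 3 → ℝ) (r : Fin 3) : ℝ :=
  ((s (r + 1) - s (r + 2)) ^ 2 - s r ^ 2) / (2 * s r)

/-- First block of the modified curvature operator of `(W⁶, g_s)`. -/
noncomputable def M6 (s a : Fin 3 → ℝ) : Matrix (Fin 3) (Fin 3) ℝ :=
  !![4 * s 0,                         -Spoly s / (2 * s 2) + a 2,  -Spoly s / (2 * s 1) + a 1;
     -Spoly s / (2 * s 2) + a 2,      4 * s 1,                     -Spoly s / (2 * s 0) + a 0;
     -Spoly s / (2 * s 1) + a 1,      -Spoly s / (2 * s 0) + a 0,  4 * s 2]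

/-!
Since `p_r = 2 s_r (s_{r+1} + s_{r+2} - s_r + a_r⁰)`, the two linear conditions of (ii) force
`p_r ≥ 0`. Conversely, `p_r ≥ 0` implies the triangle inequalities `s_r ≤ s_{r+1} + s_{r+2}`, and
we take `a_r = min (a_r⁰, S / (2 s_r))`, which makes every off-diagonal entry of `M₆` nonpositive.
A symmetric matrix with nonpositive off-diagonal entries is positive semidefinite as soon as
`M w ≥ 0` for some positive vector `w`; for `M₆` the vector `w_r = s_{r+1} + s_{r+2}` works, by
explicit polynomial certificates in the `p_r`.
-/

theorem Matrix.PosSemidef.of_offDiag_nonpos_of_mulVec_nonneg {n : Type*} [Fintype n]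
    {M : Matrix n n ℝ} (hM : M.IsHermitian) (hoff : ∀ i j, i ≠ j → M i j ≤ 0)
    {w : n → ℝ} (hw : ∀ i, 0 < w i) (hMw : ∀ i, 0 ≤ (M *ᵥ w) i) : M.PosSemidef := by
  refine .of_dotProduct_mulVec_nonneg hM fun x => ?_
  have hsymm : ∀ i j, M j i = M i j := fun i j => by
    simpa using congrFun (congrFun hM i) j
  set u : n → ℝ := fun i => x i / w i
  have hx : ∀ i, x i = w i * u i := fun i => (mul_div_cancel₀ _ (hw i).ne').symm
  have key : ∑ i, ∑ j, M i j * w i * w j * (u i - u j) ^ 2 =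
      2 * ∑ i, (M *ᵥ w) i * w i * u i ^ 2 - 2 * (star x ⬝ᵥ (M *ᵥ x)) := by
    have hswap : ∑ i, ∑ j, M i j * w i * w j * u j ^ 2 =
        ∑ i, ∑ j, M i j * w i * w j * u i ^ 2 := by
      rw [Finset.sum_comm]
      simp_rw [hsymm]
      exact Finset.sum_congr rfl fun i _ => Finset.sum_congr rfl fun j _ => by ring
    have expand : ∀ i j, M i j * w i * w j * (u i - u j) ^ 2 =
        2 * (M i j * w i * w j * u i ^ 2) - 2 * (w i * u i * (M i j * (w j * u j))) +
          (M i j * w i * w j * u j ^ 2 - M i j * w i * w j * u i ^ 2) := fun i j => by ring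
    simp_rw [expand, Finset.sum_add_distrib, Finset.sum_sub_distrib, ← Finset.mul_sum, hswap,
      sub_self, add_zero]
    simp only [star_trivial, dotProduct, mulVec, hx, Finset.mul_sum, Finset.sum_mul]
    congr 1
    exact Finset.sum_congr rfl fun i _ => Finset.sum_congr rfl fun j _ => by ring
  have hdiff : ∑ i, ∑ j, M i j * w i * w j * (u i - u j) ^ 2 ≤ 0 := by
    refine Finset.sum_nonpos fun i _ => Finset.sum_nonpos fun j _ => ?_
    rcases eq_or_ne i j with rfl | hij
    · simp
    · exact mul_nonpos_of_nonpos_of_nonneg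
        (mul_nonpos_of_nonpos_of_nonneg (mul_nonpos_of_nonpos_of_nonneg (hoff i j hij)
          (hw i).le) (hw j).le) (sq_nonneg _)
  have hdiag : 0 ≤ ∑ i, (M *ᵥ w) i * w i * u i ^ 2 :=
    Finset.sum_nonneg fun i _ => by have := hMw i; have := hw i; positivity
  linarith

section
variable {x y z : ℝ}

lemma le_add_of_quadratic_nonneg (hy : 0 < y) (hz : 0 < z)
    (hp : 0 ≤ (y - z) ^ 2 + 2 * x * (y + z) - 3 * x ^ 2) : x ≤ y + z := by
  nlinarith [mul_pos hy hz]

lemma row_cert_double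
    (hp0 : 0 ≤ (y - z) ^ 2 + 2 * x * (y + z) - 3 * x ^ 2)
    (hp1 : 0 ≤ (z - x) ^ 2 + 2 * y * (z + x) - 3 * y ^ 2)
    (hp2 : 0 ≤ (x - y) ^ 2 + 2 * z * (x + y) - 3 * z ^ 2) :
    0 ≤ 4 * x * y * z * (y + z) + y * (z + x) * ((x - y) ^ 2 - z * (x + y))
        + z * (x + y) * ((z - x) ^ 2 - y * (z + x)) := by
  linarith [mul_nonneg hp0 (sq_nonneg (x - y)), mul_nonneg hp0 (sq_nonneg (x - z)),
    mul_nonneg hp0 (sq_nonneg (y - z)), mul_nonneg hp1 (sq_nonneg (x - y)),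
    mul_nonneg hp1 (sq_nonneg (x - z)), mul_nonneg hp1 (sq_nonneg (y - z)),
    mul_nonneg hp2 (sq_nonneg (x - y)), mul_nonneg hp2 (sq_nonneg (x - z)),
    mul_nonneg hp2 (sq_nonneg (y - z))]

lemma row_cert_single (hx : 0 < x) (hy : 0 < y) (hz : 0 < z)
    (hp0 : 0 ≤ (y - z) ^ 2 + 2 * x * (y + z) - 3 * x ^ 2)
    (hp1 : 0 ≤ (z - x) ^ 2 + 2 * y * (z + x) - 3 * y ^ 2)
    (hp2 : 0 ≤ (x - y) ^ 2 + 2 * z * (x + y) - 3 * z ^ 2) :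
    0 ≤ 4 * x * z * (y + z) + (z + x) * ((x - y) ^ 2 - z * (x + y)) := by
  have hq0 : 0 ≤ y + z - x := sub_nonneg.2 (le_add_of_quadratic_nonneg hy hz hp0)
  have hq1 : 0 ≤ z + x - y := sub_nonneg.2 (le_add_of_quadratic_nonneg hz hx hp1)
  have hq2 : 0 ≤ x + y - z := sub_nonneg.2 (le_add_of_quadratic_nonneg hx hy hp2)
  linarith [mul_nonneg hp0 hq0, mul_nonneg hp0 hq1, mul_nonneg hp0 hq2,
    mul_nonneg hp1 hq0, mul_nonneg hp1 hq1, mul_nonneg hp1 hq2,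
    mul_nonneg hp2 hq0, mul_nonneg hp2 hq1, mul_nonneg hp2 hq2,
    mul_nonneg hq0 (sq_nonneg (x - y)), mul_nonneg hq0 (sq_nonneg (x - z)),
    mul_nonneg hq0 (sq_nonneg (y - z)), mul_nonneg hq1 (sq_nonneg (x - y)),
    mul_nonneg hq1 (sq_nonneg (x - z)), mul_nonneg hq1 (sq_nonneg (y - z)),
    mul_nonneg hq2 (sq_nonneg (x - y)), mul_nonneg hq2 (sq_nonneg (x - z)),
    mul_nonneg hq2 (sq_nonneg (y - z))]

lemma row_nonneg (hx : 0 < x) (hy : 0 < y) (hz : 0 < z)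
    (hp0 : 0 ≤ (y - z) ^ 2 + 2 * x * (y + z) - 3 * x ^ 2)
    (hp1 : 0 ≤ (z - x) ^ 2 + 2 * y * (z + x) - 3 * y ^ 2)
    (hp2 : 0 ≤ (x - y) ^ 2 + 2 * z * (x + y) - 3 * z ^ 2) :
    0 ≤ 4 * x * (y + z) + min (((x - y) ^ 2 - z * (x + y)) / z) 0 * (z + x)
        + min (((z - x) ^ 2 - y * (z + x)) / y) 0 * (x + y) := by
  rcases min_cases (((x - y) ^ 2 - z * (x + y)) / z) 0 with ⟨h2, -⟩ | ⟨h2, -⟩ <;>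
    rcases min_cases (((z - x) ^ 2 - y * (z + x)) / y) 0 with ⟨h1, -⟩ | ⟨h1, -⟩ <;>
    rw [h2, h1]
  · refine (div_nonneg (row_cert_double hp0 hp1 hp2) (mul_pos hy hz).le).trans_eq ?_
    field_simp
  · refine (div_nonneg (row_cert_single hx hy hz hp0 hp1 hp2) hz.le).trans_eq ?_
    field_simp
    ring
  · have hp1' : 0 ≤ (y - x) ^ 2 + 2 * z * (y + x) - 3 * z ^ 2 := by linarith
    have hp2' : 0 ≤ (x - z) ^ 2 + 2 * y * (x + z) - 3 * y ^ 2 := by linarith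
    refine (div_nonneg (row_cert_single hx hz hy (by linarith) hp1' hp2') hy.le).trans_eq ?_
    field_simp
    ring
  · positivity

end

lemma fin_three_add_cyclic (r : Fin 3) :
    r + 1 + 1 = r + 2 ∧ r + 1 + 2 = r ∧ r + 2 + 1 = r ∧ r + 2 + 2 = r + 1 := by
  fin_cases r <;> decide

lemma Spoly_eq_rotate (s : Fin 3 → ℝ) (r : Fin 3) :
    Spoly s = 2 * (s r * s (r + 1) + s r * s (r + 2) + s (r + 1) * s (r + 2))
      - (s r ^ 2 + s (r + 1) ^ 2 + s (r + 2) ^ 2) := by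
  fin_cases r <;> simp [Spoly] <;> ring

lemma Spoly_eq_sum_mul (s : Fin 3 → ℝ) :
    Spoly s = (s 1 + s 2 - s 0) * (s 2 + s 0 - s 1) + (s 2 + s 0 - s 1) * (s 0 + s 1 - s 2)
      + (s 0 + s 1 - s 2) * (s 1 + s 2 - s 0) := by
  unfold Spoly; ring

lemma ppoly_eq_mul (s : Fin 3 → ℝ) {r : Fin 3} (hr : s r ≠ 0) :
    ppoly s r = 2 * s r * (s (r + 1) + s (r + 2) - s r + a0 s r) := by
  unfold ppoly a0
  field_simp
  ring

lemma a0_sub_Spoly_div (s : Fin 3 → ℝ) {r : Fin 3} (hr : s r ≠ 0) :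
    a0 s r - Spoly s / (2 * s r) =
      ((s (r + 1) - s (r + 2)) ^ 2 - s r * (s (r + 1) + s (r + 2))) / s r := by
  rw [Spoly_eq_rotate s r]
  unfold a0
  field_simp
  ring

lemma M6_isHermitian (s a : Fin 3 → ℝ) : (M6 s a).IsHermitian := by
  ext i j
  fin_cases i <;> fin_cases j <;> simp [M6]

lemma M6_apply_nonpos_of_ne {s a : Fin 3 → ℝ} (ha : ∀ r, -Spoly s / (2 * s r) + a r ≤ 0)
    {i j : Fin 3} (hij : i ≠ j) : M6 s a i j ≤ 0 := by
  fin_cases i <;> fin_cases j <;> simp_all [M6]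

lemma M6_mulVec_apply (s a v : Fin 3 → ℝ) (r : Fin 3) :
    (M6 s a *ᵥ v) r = 4 * s r * v r + (-Spoly s / (2 * s (r + 2)) + a (r + 2)) * v (r + 1)
      + (-Spoly s / (2 * s (r + 1)) + a (r + 1)) * v (r + 2) := by
  fin_cases r <;> simp [M6, mulVec, dotProduct, Fin.sum_univ_three] <;> ring

noncomputable def aMin (s : Fin 3 → ℝ) (r : Fin 3) : ℝ := min (a0 s r) (Spoly s / (2 * s r))

lemma neg_Spoly_div_add_aMin (s : Fin 3 → ℝ) {r : Fin 3} (hr : s r ≠ 0) :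
    -Spoly s / (2 * s r) + aMin s r =
      min (((s (r + 1) - s (r + 2)) ^ 2 - s r * (s (r + 1) + s (r + 2))) / s r) 0 := by
  rw [aMin, neg_div, neg_add_eq_sub, ← min_sub_sub_right, sub_self, a0_sub_Spoly_div s hr]

lemma neg_Spoly_div_add_aMin_nonpos (s : Fin 3 → ℝ) (r : Fin 3) :
    -Spoly s / (2 * s r) + aMin s r ≤ 0 := by
  rw [neg_div, neg_add_nonpos_iff]
  exact min_le_right _ _

section
variable {s : Fin 3 → ℝ}

lemma le_add_of_ppoly_nonneg (hs : ∀ r, 0 < s r) (hp : ∀ r, 0 ≤ ppoly s r) (r : Fin 3) :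
    s r ≤ s (r + 1) + s (r + 2) :=
  le_add_of_quadratic_nonneg (hs _) (hs _) (hp r)

lemma Spoly_nonneg (h : ∀ r, s r ≤ s (r + 1) + s (r + 2)) : 0 ≤ Spoly s := by
  have h0 : s 0 ≤ s 1 + s 2 := h 0
  have h1 : s 1 ≤ s 2 + s 0 := h 1
  have h2 : s 2 ≤ s 0 + s 1 := h 2
  rw [Spoly_eq_sum_mul]
  have q0 := sub_nonneg.2 h0
  have q1 := sub_nonneg.2 h1
  have q2 := sub_nonneg.2 h2
  exact add_nonneg (add_nonneg (mul_nonneg q0 q1) (mul_nonneg q1 q2)) (mul_nonneg q2 q0)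

lemma M6_aMin_mulVec_nonneg (hs : ∀ r, 0 < s r) (hp : ∀ r, 0 ≤ ppoly s r) (r : Fin 3) :
    0 ≤ (M6 s (aMin s) *ᵥ fun r => s (r + 1) + s (r + 2)) r := by
  obtain ⟨h11, h12, h21, h22⟩ := fin_three_add_cyclic r
  have hp1 := hp (r + 1)
  have hp2 := hp (r + 2)
  simp only [ppoly, h11, h12, h21, h22] at hp1 hp2
  rw [M6_mulVec_apply, neg_Spoly_div_add_aMin s (hs _).ne', neg_Spoly_div_add_aMin s (hs _).ne']
  simp only [h11, h12, h21, h22]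
  exact row_nonneg (hs r) (hs _) (hs _) (hp r) hp1 hp2

lemma add_aMin_nonneg (hs : ∀ r, 0 < s r) (hp : ∀ r, 0 ≤ ppoly s r) (r : Fin 3) :
    0 ≤ s (r + 1) + s (r + 2) - s r + aMin s r := by
  rw [aMin, ← min_add_add_left]
  refine le_min ?_ ?_
  · refine nonneg_of_mul_nonneg_right (a := 2 * s r) ?_ (by linarith [hs r])
    rw [← ppoly_eq_mul s (hs r).ne']
    exact hp r
  · have := sub_nonneg.2 (le_add_of_ppoly_nonneg hs hp r)
    have := Spoly_nonneg (le_add_of_ppoly_nonneg hs hp)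
    have := hs r
    positivity

lemma ppoly_nonneg_of_le_a0 {a : Fin 3 → ℝ} {r : Fin 3} (hs : 0 < s r)
    (hq : 0 ≤ s (r + 1) + s (r + 2) - s r + a r) (ha : a r ≤ a0 s r) : 0 ≤ ppoly s r := by
  rw [ppoly_eq_mul s hs.ne']
  exact mul_nonneg (by positivity) (by linarith)

end

theorem stronglyNonneg_W6_iff (s : Fin 3 → ℝ) (hs : ∀ r, 0 < s r) :
    (∀ r, 0 ≤ ppoly s r) ↔
      ∃ a : Fin 3 → ℝ, (M6 s a).PosSemidef ∧
        (∀ r, 0 ≤ s (r + 1) + s (r + 2) - s r + a r) ∧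
        (∀ r, a r ≤ a0 s r) := by
  refine ⟨fun hp => ⟨aMin s, ?_, add_aMin_nonneg hs hp, fun r => min_le_left _ _⟩,
    fun ⟨a, _, hq, ha⟩ r => ppoly_nonneg_of_le_a0 (hs r) (hq r) (ha r)⟩
  exact .of_offDiag_nonpos_of_mulVec_nonneg (M6_isHermitian s _)
    (fun _ _ => M6_apply_nonpos_of_ne (neg_Spoly_div_add_aMin_nonpos s))
    (fun r => add_pos (hs (r + 1)) (hs (r + 2))) (M6_aMin_mulVec_nonneg hs hp)
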